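/- arXiv:1205.1281 — 5 statements merged into one kernel-verified Lean document; each statement's English description precedes it below -/
import Mathlib

section
/- Let k ≥ 1, let 0 < d_1 ≤ d_2 ≤ … ≤ d_k be reals and 0 < g_1, …, g_k ≤ 1. Then d_1·g_1 + d_2·g_2·(1−g_1) + … + d_k·g_k·(1−g_1)(1−g_2)⋯(1−g_{k−1}) ≤ (1/∑_{s=1}^k g_s) · (∑_{s=1}^k d_s g_s) · (∑_{t=1}^k g_t ∏_{z=1}^{t−1} (1−g_z)). -/
/-!
With `P t = ∏_{z<t} (1 - g_z)`, the left-hand side is `∑ g_s d_s P_s`. Since `d` is nondecreasing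
and `P` is nonincreasing, the two sequences are oppositely ordered, and Chebyshev's sum inequality
with weights `g_s` gives `(∑ g_s) (∑ g_s d_s P_s) ≤ (∑ g_s d_s) (∑ g_s P_s)`.
-/

open Finset

theorem AntivaryOn.sum_mul_sum_le_sum_mul_sum_of_nonneg {ι α : Type*} [CommRing α] [LinearOrder α]
    [IsStrictOrderedRing α] {s : Finset ι} {w f g : ι → α} (hw : ∀ i ∈ s, 0 ≤ w i)
    (hfg : AntivaryOn f g s) :
    (∑ i ∈ s, w i) * ∑ i ∈ s, w i * f i * g i ≤ (∑ i ∈ s, w i * f i) * ∑ i ∈ s, w i * g i := by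
  have hdouble : ∑ i ∈ s, ∑ j ∈ s, w i * w j * ((f j - f i) * (g j - g i)) ≤ 0 :=
    sum_nonpos fun i hi ↦ sum_nonpos fun j hj ↦
      mul_nonpos_of_nonneg_of_nonpos (mul_nonneg (hw i hi) (hw j hj)) (hfg.sub_mul_sub_nonpos hi hj)
  have hexpand : ∑ i ∈ s, ∑ j ∈ s, w i * w j * ((f j - f i) * (g j - g i)) =
      2 * ((∑ i ∈ s, w i) * ∑ i ∈ s, w i * f i * g i
        - (∑ i ∈ s, w i * f i) * ∑ i ∈ s, w i * g i) := by
    have hterm : ∀ i j, w i * w j * ((f j - f i) * (g j - g i)) =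
        w i * f i * g i * w j + w i * (w j * f j * g j)
          - w i * f i * (w j * g j) - w i * g i * (w j * f j) := fun i j ↦ by ring
    simp only [hterm, sum_add_distrib, sum_sub_distrib, ← sum_mul_sum]
    ring
  linarith

theorem antitoneOn_prod_range_of_le_one {R : Type*} [CommMonoidWithZero R] [Preorder R]
    [ZeroLEOneClass R] [PosMulMono R] {x : ℕ → R} {k : ℕ} (h0 : ∀ i < k, 0 ≤ x i)
    (h1 : ∀ i < k, x i ≤ 1) : AntitoneOn (fun n ↦ ∏ i ∈ range n, x i) (Set.Iic k) :=
  fun _ _ _ hm hnm ↦ prod_le_prod_of_subset_of_le_one (range_subset_range.2 hnm)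
    (fun i hi ↦ h0 i ((mem_range.1 hi).trans_le hm))
    (fun i hi _ ↦ h1 i ((mem_range.1 hi).trans_le hm))

theorem expected_distance_inequality_general (k : ℕ) (d g : ℕ → ℝ)
    (hdmono : ∀ s t, s ≤ t → t < k → d s ≤ d t)
    (hg : ∀ s < k, 0 < g s ∧ g s ≤ 1) :
    ∑ s ∈ Finset.range k, d s * g s * ∏ z ∈ Finset.range s, (1 - g z)
      ≤ (1 / ∑ s ∈ Finset.range k, g s) * (∑ s ∈ Finset.range k, d s * g s) *
          (∑ t ∈ Finset.range k, g t * ∏ z ∈ Finset.range t, (1 - g z)) := by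
  have hg0 : ∀ s ∈ range k, 0 ≤ g s := fun s hs ↦ (hg s (mem_range.1 hs)).1.le
  have hd : MonotoneOn d (range k : Set ℕ) := fun s _ t ht hst ↦ hdmono s t hst (by simpa using ht)
  have hP : AntitoneOn (fun t ↦ ∏ z ∈ range t, (1 - g z)) (range k : Set ℕ) :=
    (antitoneOn_prod_range_of_le_one (fun i hi ↦ sub_nonneg.2 (hg i hi).2)
      (fun i hi ↦ sub_le_self _ (hg i hi).1.le)).mono
      (fun t ht ↦ Set.mem_Iic.2 (mem_range.1 ht).le)
  have hcheb := (hd.antivaryOn hP).sum_mul_sum_le_sum_mul_sum_of_nonneg hg0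
  simp only [mul_comm (g _) (d _)] at hcheb
  rcases (sum_nonneg hg0).eq_or_lt with hG | hG
  · have hg_zero := (sum_eq_zero_iff_of_nonneg hg0).1 hG.symm
    rw [← hG, sum_eq_zero fun s hs ↦ by simp [hg_zero s hs]]
    simp
  · rwa [one_div_mul_eq_div, div_mul_eq_mul_div, le_div_iff₀' hG]

/-- For `0 < d_1 ≤ … ≤ d_k` and `0 < g_s ≤ 1`,
`∑_s d_s g_s ∏_{z<s}(1-g_z) ≤ (1/∑ g_s) (∑ d_s g_s) (∑_t g_t ∏_{z<t}(1-g_z))`. -/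
theorem expected_distance_inequality (k : ℕ) (hk : 1 ≤ k) (d g : ℕ → ℝ)
    (hd : ∀ s < k, 0 < d s)
    (hdmono : ∀ s t, s ≤ t → t < k → d s ≤ d t)
    (hg : ∀ s < k, 0 < g s ∧ g s ≤ 1) :
    ∑ s ∈ Finset.range k, d s * g s * ∏ z ∈ Finset.range s, (1 - g z)
      ≤ (1 / ∑ s ∈ Finset.range k, g s) * (∑ s ∈ Finset.range k, d s * g s) *
          (∑ t ∈ Finset.range k, g t * ∏ z ∈ Finset.range t, (1 - g z)) :=
  expected_distance_inequality_general k d g hdmono hg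
end

section
/- Suppose A is a polynomial-time algorithm that, on any FTFP instance with maximum demand at most |F|, outputs a feasible integral solution of cost at most ρ times the optimal fractional LP cost of that instance, where ρ ≥ 1. Let (x̂, ŷ) and (ẋ, ẏ) be the integer and fractional parts of a complete optimal fractional solution (x*, y*) of an arbitrary instance I, inducing instances Î and İ with demands r̂_j = ∑_i x̂_{ij} and ṙ_j = r_j − r̂_j. Then the combined solution (x̂, ŷ) plus A's output on İ is feasible for I and has cost at most ρ · cost(x*, y*) ≤ ρ · OPT(I). -/
/-!
Split the complete solution into its integer part `(⌊x*⌋, ⌊y*⌋)` and its fractional part.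
Completeness makes the fractional part feasible for the residual instance `İ`: wherever
`x*_{ij} > 0` the fractional parts of `x*_{ij}` and `y*_i` coincide. So `A` pays at most `ρ` times
the cost of the fractional part, the integer part is paid once, and `1 ≤ ρ` together with
nonnegative costs gives the bound `ρ · cost(x*, y*)`.
-/

open Finset

namespace FTFP

theorem sub_toNat_floor_eq_fract {α : Type*} [Ring α] [LinearOrder α] [FloorRing α] {a : α}
    (ha : 0 ≤ a) : a - (⌊a⌋.toNat : α) = Int.fract a := by
  rw [Int.floor_toNat, natCast_floor_eq_intCast_floor ha, Int.self_sub_floor]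

theorem fract_le_fract_of_pos_imp_eq {α : Type*} [Ring α] [LinearOrder α]
    [IsStrictOrderedRing α] [FloorRing α] {a b : α} (ha : 0 ≤ a) (hab : 0 < a → a = b) :
    Int.fract a ≤ Int.fract b := by
  rcases ha.eq_or_lt with rfl | hpos
  · simp [Int.fract_nonneg]
  · rw [hab hpos]

variable {F C : Type*} [Fintype F]

def IsFeasible (r : C → ℝ) (x : F → C → ℝ) (y : F → ℝ) : Prop :=
  (∀ i j, 0 ≤ x i j) ∧ (∀ i j, x i j ≤ y i) ∧ ∀ j, r j ≤ ∑ i, x i j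

theorem isFeasible_sub_toNat_floor {x : F → C → ℝ} {y : F → ℝ} (hx : ∀ i j, 0 ≤ x i j)
    (hxy : ∀ i j, x i j ≤ y i) (hcomp : ∀ i j, 0 < x i j → x i j = y i) :
    IsFeasible (fun j => ∑ i, (x i j - ⌊x i j⌋))
      (x - fun i j => (⌊x i j⌋.toNat : ℝ)) (y - fun i => (⌊y i⌋.toNat : ℝ)) := by
  have hfract : ∀ i j, x i j - (⌊x i j⌋.toNat : ℝ) = Int.fract (x i j) :=
    fun i j => sub_toNat_floor_eq_fract (hx i j)
  refine ⟨fun i j => ?_, fun i j => ?_, fun j => ?_⟩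
  · simp only [Pi.sub_apply, hfract]
    exact Int.fract_nonneg _
  · simp only [Pi.sub_apply, hfract, sub_toNat_floor_eq_fract ((hx i j).trans (hxy i j))]
    exact fract_le_fract_of_pos_imp_eq (hx i j) (hcomp i j)
  · simp only [Pi.sub_apply, hfract, Int.fract, le_refl]

variable [Fintype C]

def cost (f : F → ℝ) (dist : F → C → ℝ) (x : F → C → ℝ) (y : F → ℝ) : ℝ :=
  ∑ i, f i * y i + ∑ i, ∑ j, dist i j * x i j

variable {f : F → ℝ} {dist : F → C → ℝ}

theorem cost_add (x x' : F → C → ℝ) (y y' : F → ℝ) :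
    cost f dist (x + x') (y + y') = cost f dist x y + cost f dist x' y' := by
  simp only [cost, Pi.add_apply, mul_add, sum_add_distrib]
  ring

theorem cost_nonneg (hf : ∀ i, 0 ≤ f i) (hd : ∀ i j, 0 ≤ dist i j) {x : F → C → ℝ} {y : F → ℝ}
    (hx : ∀ i j, 0 ≤ x i j) (hy : ∀ i, 0 ≤ y i) : 0 ≤ cost f dist x y :=
  add_nonneg (sum_nonneg fun i _ => mul_nonneg (hf i) (hy i))
    (sum_nonneg fun i _ => sum_nonneg fun j _ => mul_nonneg (hd i j) (hx i j))

theorem cost_add_le_mul_cost {ρ : ℝ} (hρ : 1 ≤ ρ) (hf : ∀ i, 0 ≤ f i)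
    (hd : ∀ i j, 0 ≤ dist i j) {x xI xA : F → C → ℝ} {y yI yA : F → ℝ}
    (hxI : ∀ i j, 0 ≤ xI i j) (hyI : ∀ i, 0 ≤ yI i)
    (hA : cost f dist xA yA ≤ ρ * cost f dist (x - xI) (y - yI)) :
    cost f dist (xI + xA) (yI + yA) ≤ ρ * cost f dist x y := by
  have hI := cost_nonneg hf hd hxI hyI
  have hsplit : cost f dist x y = cost f dist xI yI + cost f dist (x - xI) (y - yI) := by
    rw [← cost_add, add_sub_cancel, add_sub_cancel]
  rw [cost_add, hsplit]
  nlinarith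

end FTFP

open FTFP in
/-- Demand reduction for FTFP: given a complete optimal fractional solution
`(xs, ys)` of an instance `I` (sites `F`, clients `C`, facility costs `f`,
distances `dist`, demands `r`), split it into its integer part `(⌊xs⌋, ⌊ys⌋)`
and fractional part, the latter inducing the residual instance `İ` with
demands `ṙ_j = ∑_i (xs_{ij} - ⌊xs_{ij}⌋)`.  If algorithm `A` outputs an
integral solution `(xA, yA)` feasible for `İ` whose cost is at most `ρ` times
the cost of every fractional feasible solution of `İ` (in particular, at most
`ρ` times the optimal fractional LP cost of `İ`), then the combined integral
solution `(⌊xs⌋ + xA, ⌊ys⌋ + yA)` is feasible for `I`, has cost at most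
`ρ · cost(xs, ys)`, and hence cost at most `ρ · OPT(I)` (i.e. at most
`ρ` times the cost of every feasible integral solution of `I`). -/
theorem demand_reduction {F C : Type*} [Fintype F] [Fintype C]
    (f : F → ℝ) (dist : F → C → ℝ) (r : C → ℝ) (ρ : ℝ) (hρ : 1 ≤ ρ)
    (hf : ∀ i, 0 ≤ f i) (hd : ∀ i j, 0 ≤ dist i j)
    (xs : F → C → ℝ) (ys : F → ℝ)
    (hxnn : ∀ i j, 0 ≤ xs i j) (hxy : ∀ i j, xs i j ≤ ys i)
    (hfeas : ∀ j, r j ≤ ∑ i, xs i j)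
    (hcomp : ∀ i j, 0 < xs i j → xs i j = ys i)
    (hopt : ∀ (x : F → C → ℝ) (y : F → ℝ),
      (∀ i j, 0 ≤ x i j) → (∀ i j, x i j ≤ y i) → (∀ j, r j ≤ ∑ i, x i j) →
      (∑ i, f i * ys i) + ∑ i, ∑ j, dist i j * xs i j
        ≤ (∑ i, f i * y i) + ∑ i, ∑ j, dist i j * x i j)
    (xA : F → C → ℕ) (yA : F → ℕ)
    (hAxy : ∀ i j, xA i j ≤ yA i)
    (hAfeas : ∀ j, (∑ i, (xs i j - (⌊xs i j⌋ : ℝ))) ≤ ∑ i, (xA i j : ℝ))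
    (hAcost : ∀ (x : F → C → ℝ) (y : F → ℝ),
      (∀ i j, 0 ≤ x i j) → (∀ i j, x i j ≤ y i) →
      (∀ j, (∑ i, (xs i j - (⌊xs i j⌋ : ℝ))) ≤ ∑ i, x i j) →
      (∑ i, f i * (yA i : ℝ)) + ∑ i, ∑ j, dist i j * (xA i j : ℝ)
        ≤ ρ * ((∑ i, f i * y i) + ∑ i, ∑ j, dist i j * x i j)) :
    (∀ i j, (⌊xs i j⌋.toNat + xA i j : ℕ) ≤ (⌊ys i⌋.toNat + yA i : ℕ)) ∧
    (∀ j, r j ≤ ∑ i, ((⌊xs i j⌋.toNat + xA i j : ℕ) : ℝ)) ∧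
    ((∑ i, f i * ((⌊ys i⌋.toNat + yA i : ℕ) : ℝ))
       + ∑ i, ∑ j, dist i j * ((⌊xs i j⌋.toNat + xA i j : ℕ) : ℝ)
      ≤ ρ * ((∑ i, f i * ys i) + ∑ i, ∑ j, dist i j * xs i j)) ∧
    (∀ (xo : F → C → ℕ) (yo : F → ℕ),
      (∀ i j, xo i j ≤ yo i) → (∀ j, r j ≤ ∑ i, (xo i j : ℝ)) →
      (∑ i, f i * ((⌊ys i⌋.toNat + yA i : ℕ) : ℝ))
        + ∑ i, ∑ j, dist i j * ((⌊xs i j⌋.toNat + xA i j : ℕ) : ℝ)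
      ≤ ρ * ((∑ i, f i * (yo i : ℝ)) + ∑ i, ∑ j, dist i j * (xo i j : ℝ))) := by
  have hresidual := isFeasible_sub_toNat_floor hxnn hxy hcomp
  have hcost := cost_add_le_mul_cost (x := xs) (y := ys) (xA := fun i j => (xA i j : ℝ))
    (yA := fun i => (yA i : ℝ)) hρ hf hd (fun _ _ => Nat.cast_nonneg _) (fun _ => Nat.cast_nonneg _)
    (hAcost _ _ hresidual.1 hresidual.2.1 hresidual.2.2)
  simp only [Nat.cast_add]
  refine ⟨fun i j => ?_, fun j => ?_, hcost, fun xo yo hxoyo hxo => ?_⟩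
  · exact add_le_add (Int.toNat_le_toNat (Int.floor_le_floor (hxy i j))) (hAxy i j)
  · have hresidual_demand : ∑ i, (xs i j - ⌊xs i j⌋) = ∑ i, xs i j - ∑ i, (⌊xs i j⌋.toNat : ℝ) := by
      simp only [← sum_sub_distrib, Int.self_sub_floor, sub_toNat_floor_eq_fract (hxnn _ j)]
    rw [sum_add_distrib]
    linarith [hfeas j, hAfeas j]
  · exact hcost.trans (mul_le_mul_of_nonneg_left
      (hopt _ _ (fun _ _ => Nat.cast_nonneg _) (fun i j => Nat.cast_le.mpr (hxoyo i j)) hxo)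
      (by linarith))
end

section
/- Let ν be a demand with neighborhood N(ν) and assigned primary demand κ with neighborhood N(κ), where N(κ) \ N(ν) ≠ ∅. Suppose: (i) for all μ ∈ N(ν), d_{μν} ≤ α_ν; (ii) for all μ ∈ N(κ), d_{μκ} ≤ α_κ; (iii) C^avg_κ + α_κ ≤ C^avg_ν + α_ν, where C^avg_η = D(N(η), η) denotes a weighted average of distances d_{μη} over μ ∈ N(η) with positive weights; (iv) distances satisfy the triangle inequality d_{μν} ≤ d_{μκ} + d_{μ'κ} + d_{μ'ν} for all facilities μ, μ'; (v) N(κ) ∩ N(ν) ≠ ∅. Then D(N(κ) \ N(ν), ν) ≤ C^avg_ν + 2α_ν. -/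
/-!
Write `S = N(κ) \ N(ν)` and pick a facility `μ'` in `N(κ) ∩ N(ν)`. The triangle inequality
through `μ'` gives `D(S, ν) ≤ D(S, κ) + d_{μ'κ} + α_ν`, so it suffices that
`D(S, κ) + d_{μ'κ} ≤ C^avg_κ + α_κ` for a suitable `μ'`. If some `μ'` has `d_{μ'κ} ≤ C^avg_κ`,
use `D(S, κ) ≤ α_κ`. Otherwise every facility of `N(κ) ∩ N(ν)` is at least as far from `κ`
as the average, so removing them does not increase the average: `D(S, κ) ≤ C^avg_κ`,
while `d_{μ'κ} ≤ α_κ`.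
-/

open Finset

/-- `weightedAvg A w d_η` is the paper's `D(A, η)`. -/
noncomputable def weightedAvg {ι : Type*} (s : Finset ι) (w f : ι → ℝ) : ℝ :=
  (∑ i ∈ s, f i * w i) / ∑ i ∈ s, w i

section WeightedAvg

variable {ι : Type*} {s t : Finset ι} {w f g : ι → ℝ} {c : ℝ}

lemma weightedAvg_mono (hw : ∀ i ∈ s, 0 ≤ w i) (hfg : ∀ i ∈ s, f i ≤ g i) :
    weightedAvg s w f ≤ weightedAvg s w g :=
  div_le_div_of_nonneg_right
    (sum_le_sum fun i hi => mul_le_mul_of_nonneg_right (hfg i hi) (hw i hi))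
    (sum_nonneg hw)

lemma weightedAvg_add_const (hs : ∑ i ∈ s, w i ≠ 0) :
    weightedAvg s w (fun i => f i + c) = weightedAvg s w f + c := by
  simp only [weightedAvg, add_mul, sum_add_distrib, ← mul_sum]
  field_simp

lemma weightedAvg_le_of_forall_le (hw : ∀ i ∈ s, 0 ≤ w i) (hs : 0 < ∑ i ∈ s, w i)
    (hf : ∀ i ∈ s, f i ≤ c) : weightedAvg s w f ≤ c := by
  rw [weightedAvg, div_le_iff₀ hs, mul_sum]
  exact sum_le_sum fun i hi => mul_le_mul_of_nonneg_right (hf i hi) (hw i hi)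

lemma weightedAvg_sdiff_le [DecidableEq ι] (hw : ∀ i ∈ s, 0 ≤ w i)
    (hpos : 0 < ∑ i ∈ s \ t, w i)
    (hf : ∀ i ∈ s ∩ t, weightedAvg s w f ≤ f i) :
    weightedAvg (s \ t) w f ≤ weightedAvg s w f := by
  set C := weightedAvg s w f
  have hsplit : ∀ v : ι → ℝ, ∑ i ∈ s, v i = ∑ i ∈ s ∩ t, v i + ∑ i ∈ s \ t, v i := fun v =>
    (sum_inter_add_sum_sdiff s t v).symm
  have hwinter : 0 ≤ ∑ i ∈ s ∩ t, w i := sum_nonneg fun i hi => hw i (mem_inter.1 hi).1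
  have hinter : C * ∑ i ∈ s ∩ t, w i ≤ ∑ i ∈ s ∩ t, f i * w i := by
    rw [mul_sum]
    exact sum_le_sum fun i hi =>
      mul_le_mul_of_nonneg_right (hf i hi) (hw i (mem_inter.1 hi).1)
  have htotal : ∑ i ∈ s, f i * w i = C * ∑ i ∈ s, w i := by
    have : 0 < ∑ i ∈ s, w i := by linarith [hsplit w]
    simp only [C, weightedAvg]
    field_simp
  rw [weightedAvg, div_le_iff₀ hpos]
  rw [hsplit, hsplit w] at htotal
  linarith

end WeightedAvg

theorem indirect_connection_bound_general {ι : Type*} [DecidableEq ι]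
    (Nν Nκ : Finset ι) (w dν dκ : ι → ℝ) (αν ακ Cν Cκ : ℝ)
    (hw : ∀ μ, 0 < w μ)
    (hKdiff : (Nκ \ Nν).Nonempty)
    (hint : (Nκ ∩ Nν).Nonempty)
    (hν : ∀ μ ∈ Nν, dν μ ≤ αν)
    (hκ : ∀ μ ∈ Nκ, dκ μ ≤ ακ)
    (hCκ : Cκ = (∑ μ ∈ Nκ, dκ μ * w μ) / (∑ μ ∈ Nκ, w μ))
    (hPD : Cκ + ακ ≤ Cν + αν)
    (htri : ∀ μ μ', dν μ ≤ dκ μ + dκ μ' + dν μ') :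
    (∑ μ ∈ Nκ \ Nν, dν μ * w μ) / (∑ μ ∈ Nκ \ Nν, w μ) ≤ Cν + 2 * αν := by
  have hS : 0 < ∑ μ ∈ Nκ \ Nν, w μ := sum_pos (fun μ _ => hw μ) hKdiff
  have hwS : ∀ μ ∈ Nκ \ Nν, 0 ≤ w μ := fun μ _ => (hw μ).le
  have hvia : ∀ μ' ∈ Nκ ∩ Nν,
      weightedAvg (Nκ \ Nν) w dν ≤ weightedAvg (Nκ \ Nν) w dκ + (dκ μ' + αν) := by
    intro μ' hμ'
    rw [← weightedAvg_add_const hS.ne']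
    refine weightedAvg_mono hwS fun μ _ => (htri μ μ').trans ?_
    linarith [hν μ' (mem_inter.1 hμ').2]
  change weightedAvg (Nκ \ Nν) w dν ≤ _
  by_cases hnear : ∃ μ' ∈ Nκ ∩ Nν, dκ μ' ≤ Cκ
  · obtain ⟨μ', hμ', hμ'C⟩ := hnear
    have hSκ := weightedAvg_le_of_forall_le hwS hS fun μ hμ => hκ μ (mem_sdiff.1 hμ).1
    linarith [hvia μ' hμ']
  · push Not at hnear
    obtain ⟨μ', hμ'⟩ := hint
    have hCκ' : Cκ = weightedAvg Nκ w dκ := hCκ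
    have hSκ : weightedAvg (Nκ \ Nν) w dκ ≤ Cκ := hCκ' ▸
      weightedAvg_sdiff_le (fun μ _ => (hw μ).le) hS fun μ hμ => hCκ' ▸ (hnear μ hμ).le
    linarith [hvia μ' hμ', hκ μ' (mem_inter.1 hμ').1]

/-- Indirect connection cost bound (Lemma 5 for Algorithm ECHS): if demand `ν`
is assigned to primary demand `κ`, with `N(κ) \ N(ν) ≠ ∅`, `N(κ) ∩ N(ν) ≠ ∅`,
distances in each neighborhood bounded by the dual values, the average-cost
comparison `C^avg_κ + α_κ ≤ C^avg_ν + α_ν`, and the triangle inequality, then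
the weighted average distance from `ν` to `N(κ) \ N(ν)` is at most
`C^avg_ν + 2 α_ν`.  Here `D(A, f) = (∑_{μ∈A} f μ · w μ)/(∑_{μ∈A} w μ)`. -/
theorem indirect_connection_bound {ι : Type*} [DecidableEq ι]
    (Nν Nκ : Finset ι) (w dν dκ : ι → ℝ) (αν ακ Cν Cκ : ℝ)
    (hw : ∀ μ, 0 < w μ)
    (hKdiff : (Nκ \ Nν).Nonempty)
    (hint : (Nκ ∩ Nν).Nonempty)
    (hν : ∀ μ ∈ Nν, dν μ ≤ αν)
    (hκ : ∀ μ ∈ Nκ, dκ μ ≤ ακ)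
    (hCν : Cν = (∑ μ ∈ Nν, dν μ * w μ) / (∑ μ ∈ Nν, w μ))
    (hCκ : Cκ = (∑ μ ∈ Nκ, dκ μ * w μ) / (∑ μ ∈ Nκ, w μ))
    (hPD : Cκ + ακ ≤ Cν + αν)
    (htri : ∀ μ μ', dν μ ≤ dκ μ + dκ μ' + dν μ') :
    (∑ μ ∈ Nκ \ Nν, dν μ * w μ) / (∑ μ ∈ Nκ \ Nν, w μ) ≤ Cν + 2 * αν :=
  indirect_connection_bound_general Nν Nκ w dν dκ αν ακ Cν Cκ hw hKdiff hint hν hκ hCκ hPD htri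
end

section
/- Let a demand ν have neighborhood partitioned into disjoint groups G_1, …, G_k with average distances d̄_s = D(G_s, ν) nondecreasing in s, and group selection probabilities g_s ∈ (0,1] with ∑_s g_s = 1. If ν connects to the facility opened in the smallest-index selected group, then the conditional expected connection cost given at least one group is selected is at most ∑_{s=1}^k d̄_s g_s. -/
/-! Write `Q s = ∏_{z<s} (1 - g z)` for the probability that none of the first `s` groups is
selected. Telescoping gives `1 - Q k = ∑ g s Q s`, so the claim is the weighted Chebyshev
inequality `(∑ d̄ g Q) (∑ g) ≤ (∑ d̄ g) (∑ g Q)` for the weights `g`, the nondecreasing `d̄`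
and the nonincreasing `Q`. -/

open Finset

theorem AntivaryOn.weighted_sum_mul_sum_le_sum_mul_sum {ι R : Type*} [CommRing R] [LinearOrder R]
    [IsStrictOrderedRing R] {s : Finset ι} {w f g : ι → R}
    (hw : ∀ i ∈ s, 0 ≤ w i) (hfg : AntivaryOn f g s) :
    (∑ i ∈ s, f i * w i * g i) * ∑ i ∈ s, w i ≤
      (∑ i ∈ s, f i * w i) * ∑ i ∈ s, w i * g i := by
  set T : ι → ι → R := fun i j => w i * w j * (f i * (g j - g i))
  have hdiff : (∑ i ∈ s, f i * w i) * (∑ i ∈ s, w i * g i) -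
      (∑ i ∈ s, f i * w i * g i) * ∑ i ∈ s, w i = ∑ i ∈ s, ∑ j ∈ s, T i j := by
    rw [sum_mul_sum, sum_mul_sum, ← sum_sub_distrib]
    refine sum_congr rfl fun i _ => ?_
    rw [← sum_sub_distrib]
    exact sum_congr rfl fun j _ => by ring
  -- Pairing `(i, j)` with `(j, i)` leaves `w i w j (f i - f j) (g j - g i) ≥ 0`.
  have hpair : 0 ≤ ∑ i ∈ s, ∑ j ∈ s, (T i j + T j i) := by
    refine sum_nonneg fun i hi => sum_nonneg fun j hj => ?_
    have hij := hfg.sub_mul_sub_nonpos (mem_coe.2 hi) (mem_coe.2 hj)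
    have hT : T i j + T j i = -(w i * w j * ((f j - f i) * (g j - g i))) := by ring
    rw [hT, neg_nonneg]
    exact mul_nonpos_of_nonneg_of_nonpos (mul_nonneg (hw i hi) (hw j hj)) hij
  have hswap : ∑ i ∈ s, ∑ j ∈ s, T j i = ∑ i ∈ s, ∑ j ∈ s, T i j := sum_comm
  simp only [sum_add_distrib, hswap] at hpair
  linarith

theorem antitoneOn_prod_range {R : Type*} [CommSemiring R] [PartialOrder R] [IsOrderedRing R]
    {f : ℕ → R} {k : ℕ} (hf : ∀ i < k, 0 ≤ f i ∧ f i ≤ 1) :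
    AntitoneOn (fun n => ∏ i ∈ range n, f i) (Set.Iic k) := fun _ _ _ hn hmn =>
  prod_le_prod_of_subset_of_le_one (range_subset_range.2 hmn)
    (fun i hi => (hf i ((mem_range.1 hi).trans_le hn)).1)
    (fun i hi _ => (hf i ((mem_range.1 hi).trans_le hn)).2)

theorem sum_range_mul_prod_range_one_sub {R : Type*} [CommRing R] (f : ℕ → R) (n : ℕ) :
    ∑ i ∈ range n, f i * ∏ j ∈ range i, (1 - f j) = 1 - ∏ i ∈ range n, (1 - f i) := by
  induction n with
  | zero => simp
  | succ n ih => rw [sum_range_succ, ih, prod_range_succ]; ring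

theorem conditional_expected_connection_cost_general (k : ℕ)
    (dbar g : ℕ → ℝ)
    (hmono : ∀ s t, s ≤ t → t < k → dbar s ≤ dbar t)
    (hg : ∀ s < k, 0 < g s ∧ g s ≤ 1)
    (hsum : ∑ s ∈ Finset.range k, g s = 1) :
    (∑ s ∈ Finset.range k, dbar s * g s * ∏ z ∈ Finset.range s, (1 - g z)) /
        (1 - ∏ s ∈ Finset.range k, (1 - g s))
      ≤ ∑ s ∈ Finset.range k, dbar s * g s := by
  set Q : ℕ → ℝ := fun s => ∏ z ∈ range s, (1 - g z)
  have hk : 0 < k := Nat.pos_of_ne_zero (by rintro rfl; simp at hsum)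
  have hQ : AntitoneOn Q (Set.Iic k) :=
    antitoneOn_prod_range fun z hz => ⟨by linarith [hg z hz], by linarith [hg z hz]⟩
  have hden : 0 < 1 - Q k := by
    have hQk : Q k ≤ Q 1 := hQ (Set.mem_Iic.2 hk) (Set.mem_Iic.2 le_rfl) hk
    have hQ1 : Q 1 = 1 - g 0 := by simp [Q]
    linarith [(hg 0 hk).1]
  have hanti : AntivaryOn dbar Q (range k) := by
    rw [coe_range]
    exact MonotoneOn.antivaryOn (fun s _ t ht hst => hmono s t hst ht)
      (hQ.mono Set.Iio_subset_Iic_self)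
  have hcheb := hanti.weighted_sum_mul_sum_le_sum_mul_sum fun s hs => (hg s (mem_range.1 hs)).1.le
  rw [hsum, mul_one, sum_range_mul_prod_range_one_sub] at hcheb
  rw [div_le_iff₀ hden]
  linarith

/-- Lemma 6 for Algorithm ECHS: if the groups have nondecreasing average
distances `d̄_s` and selection probabilities `g_s ∈ (0,1]` with `∑ g_s = 1`,
then the conditional expected connection cost, given that at least one group
is selected (connecting to the smallest-index selected group), is at most
`∑ d̄_s g_s`. -/
theorem conditional_expected_connection_cost (k : ℕ) (hk : 1 ≤ k)
    (dbar g : ℕ → ℝ)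
    (hmono : ∀ s t, s ≤ t → t < k → dbar s ≤ dbar t)
    (hg : ∀ s < k, 0 < g s ∧ g s ≤ 1)
    (hsum : ∑ s ∈ Finset.range k, g s = 1) :
    (∑ s ∈ Finset.range k, dbar s * g s * ∏ z ∈ Finset.range s, (1 - g z)) /
        (1 - ∏ s ∈ Finset.range k, (1 - g s))
      ≤ ∑ s ∈ Finset.range k, dbar s * g s :=
  conditional_expected_connection_cost_general k dbar g hmono hg hsum
end

section
/- Let K, V_cls, V_far be a partition of N_cls(κ) (the close neighborhood of primary demand κ) with K = N_cls(κ)\N(ν), V_cls = N_cls(κ)∩N_cls(ν), V_far = N_cls(κ)∩N_far(ν), where K ≠ ∅ and V_cls ≠ ∅. Assume the triangle inequality on distances, d_{μν} ≤ C_cls^max(ν) for μ ∈ V_cls, C_cls^max(ν) ≤ C_far(ν), d_{μκ} ≤ C_cls^max(κ) for μ ∈ N_cls(κ), and C_cls(κ) + C_cls^max(κ) ≤ C_cls(ν) + C_cls^max(ν). If moreover D(K, κ) ≤ C_cls(κ), then D(K, ν) ≤ C_cls(ν) + 2·C_far(ν). -/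
open Finset

theorem Finset.sum_mul_div_sum_le_add {ι : Type*} {s : Finset ι} {w f g : ι → ℝ} {c : ℝ}
    (hw : ∀ i ∈ s, 0 ≤ w i) (hs : 0 < ∑ i ∈ s, w i) (hfg : ∀ i ∈ s, f i ≤ g i + c) :
    (∑ i ∈ s, f i * w i) / (∑ i ∈ s, w i) ≤ (∑ i ∈ s, g i * w i) / (∑ i ∈ s, w i) + c := by
  have hshift : ∑ i ∈ s, (g i + c) * w i = ∑ i ∈ s, g i * w i + c * ∑ i ∈ s, w i := by
    simp only [add_mul, sum_add_distrib, mul_sum]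
  calc (∑ i ∈ s, f i * w i) / (∑ i ∈ s, w i)
      ≤ (∑ i ∈ s, (g i + c) * w i) / (∑ i ∈ s, w i) := by
        gcongr with i hi
        exacts [hw i hi, hfg i hi]
    _ = (∑ i ∈ s, g i * w i) / (∑ i ∈ s, w i) + c := by
        rw [hshift, add_div, mul_div_cancel_right₀ _ hs.ne']

theorem ebgs_lemma15_case1_general {ι : Type*} [DecidableEq ι]
    (K Vcls Vfar : Finset ι) (w dν dκ : ι → ℝ)
    (Cclsκ Cmaxκ Cclsν Cmaxν Cfarν : ℝ)
    (hw : ∀ μ, 0 < w μ)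
    (hK : K.Nonempty) (hV : Vcls.Nonempty)
    (htri : ∀ μ μ', dν μ ≤ dκ μ + dκ μ' + dν μ')
    (hVcls : ∀ μ ∈ Vcls, dν μ ≤ Cmaxν)
    (hmf : Cmaxν ≤ Cfarν)
    (hκmax : ∀ μ ∈ K ∪ Vcls ∪ Vfar, dκ μ ≤ Cmaxκ)
    (hPD : Cclsκ + Cmaxκ ≤ Cclsν + Cmaxν)
    (hcase : (∑ μ ∈ K, dκ μ * w μ) / (∑ μ ∈ K, w μ) ≤ Cclsκ) :
    (∑ μ ∈ K, dν μ * w μ) / (∑ μ ∈ K, w μ) ≤ Cclsν + 2 * Cfarν := by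
  obtain ⟨μ', hμ'⟩ := hV
  -- every `μ ∈ K` reaches `ν` through the facility `μ'`, which is close to both `κ` and `ν`
  have hdetour : ∀ μ ∈ K, dν μ ≤ dκ μ + (Cmaxκ + Cmaxν) := fun μ _ => by
    linarith [htri μ μ', hκmax μ' (by simp [hμ']), hVcls μ' hμ']
  calc (∑ μ ∈ K, dν μ * w μ) / (∑ μ ∈ K, w μ)
      ≤ (∑ μ ∈ K, dκ μ * w μ) / (∑ μ ∈ K, w μ) + (Cmaxκ + Cmaxν) :=
        sum_mul_div_sum_le_add (fun μ _ => (hw μ).le) (sum_pos (fun μ _ => hw μ) hK) hdetour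
    _ ≤ Cclsκ + (Cmaxκ + Cmaxν) := by gcongr
    _ ≤ Cclsν + 2 * Cfarν := by linarith

/-- Case 1 of the proof of Lemma 15 (Algorithm EBGS): with
`K, V_cls, V_far` a partition of `N_cls(κ)`, `K, V_cls` nonempty, triangle
inequality, `d_{μν} ≤ C_cls^max(ν)` on `V_cls`, `C_cls^max(ν) ≤ C_far(ν)`,
`d_{μκ} ≤ C_cls^max(κ)` on `N_cls(κ)`, and
`C_cls(κ) + C_cls^max(κ) ≤ C_cls(ν) + C_cls^max(ν)`: if `D(K,κ) ≤ C_cls(κ)`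
then `D(K,ν) ≤ C_cls(ν) + 2·C_far(ν)`.  Here
`D(A,f) = (∑_{μ∈A} f μ · w μ)/(∑_{μ∈A} w μ)` with positive weights. -/
theorem ebgs_lemma15_case1 {ι : Type*} [DecidableEq ι]
    (K Vcls Vfar : Finset ι) (w dν dκ : ι → ℝ)
    (Cclsκ Cmaxκ Cclsν Cmaxν Cfarν : ℝ)
    (hw : ∀ μ, 0 < w μ)
    (hK : K.Nonempty) (hV : Vcls.Nonempty)
    (hd1 : Disjoint K Vcls) (hd2 : Disjoint K Vfar) (hd3 : Disjoint Vcls Vfar)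
    (htri : ∀ μ μ', dν μ ≤ dκ μ + dκ μ' + dν μ')
    (hVcls : ∀ μ ∈ Vcls, dν μ ≤ Cmaxν)
    (hmf : Cmaxν ≤ Cfarν)
    (hκmax : ∀ μ ∈ K ∪ Vcls ∪ Vfar, dκ μ ≤ Cmaxκ)
    (hPD : Cclsκ + Cmaxκ ≤ Cclsν + Cmaxν)
    (hcase : (∑ μ ∈ K, dκ μ * w μ) / (∑ μ ∈ K, w μ) ≤ Cclsκ) :
    (∑ μ ∈ K, dν μ * w μ) / (∑ μ ∈ K, w μ) ≤ Cclsν + 2 * Cfarν :=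
  ebgs_lemma15_case1_general K Vcls Vfar w dν dκ Cclsκ Cmaxκ Cclsν Cmaxν Cfarν hw hK hV htri hVcls
    hmf hκmax hPD hcase
end
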